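/- Let X be a complex Banach space, let x : ℕ → X be a sequence with M := sup_{n≥0} ‖∑_{j=0}^{n} x_j‖ < ∞, let ε ∈ (0,1], and let z : ℤ → ℂ and K > 0 be such that |z_n − z_{n−1}| ≤ K ε² for all n ∈ ℤ and |z_n − z_{n−1}| ≤ K/n² for all n ≠ 0. Then, writing s_j = ∑_{i=0}^{j} x_i, the series ∑_{j≥0} s_j (z_{n−j} − z_{n−j−1}) converges absolutely for every n ≥ 0 and ‖∑_{j≥0} s_j (z_{n−j} − z_{n−j−1})‖ ≤ 8 K M ε. -/

import Mathlib

open Set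

/-! Put `d k = ‖z k - z (k - 1)‖`. Since `‖s_j‖ ≤ M`, the series is dominated by
`M ∑_j d (n - j) ≤ M ∑_{k ∈ ℤ} d k`, so it suffices to bound `∑_{k ≥ 0} d (±k)` by `4 K ε`.
With `N = ⌊1/ε⌋`, the at most `N + 1 ≤ 1/ε + 1` terms with `k ≤ N` contribute at most
`(1/ε + 1) K ε² ≤ 2 K ε`, and the terms with `k > N` at most
`K ∑_{k > N} 1/k² ≤ 2K/(N + 1) ≤ 2 K ε`. -/

lemma sum_range_le_of_le_mul_sq_of_le_div_sq {e : ℕ → ℝ} {K ε : ℝ} (hε : ε ∈ Ioc (0 : ℝ) 1)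
    (he : ∀ m, 0 ≤ e m) (h_small : ∀ m, e m ≤ K * ε ^ 2)
    (h_big : ∀ m, m ≠ 0 → e m ≤ K / (m : ℝ) ^ 2) (a : ℕ) :
    ∑ m ∈ Finset.range a, e m ≤ 4 * K * ε := by
  obtain ⟨hε0, hε1⟩ := hε
  have hK : 0 ≤ K := nonneg_of_mul_nonneg_left ((he 0).trans (h_small 0)) (by positivity)
  set N := ⌊ε⁻¹⌋₊
  have hN_le : (N : ℝ) ≤ ε⁻¹ := Nat.floor_le (by positivity)
  have hN_lt : ε⁻¹ < N + 1 := Nat.lt_floor_add_one _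
  have head : ∑ m ∈ Finset.range (N + 1), e m ≤ 2 * K * ε := calc
    _ ≤ (N + 1) * (K * ε ^ 2) := by
      simpa using Finset.sum_le_card_nsmul (Finset.range (N + 1)) _ _ fun m _ => h_small m
    _ ≤ (ε⁻¹ + 1) * (K * ε ^ 2) := by gcongr
    _ = K * ε + K * ε * ε := by field_simp
    _ ≤ 2 * K * ε := by nlinarith [mul_nonneg hK hε0.le]
  have tail : ∑ m ∈ Finset.Ioo N a, e m ≤ 2 * K * ε := calc
    _ ≤ ∑ m ∈ Finset.Ioo N a, K * ((m : ℝ) ^ 2)⁻¹ := Finset.sum_le_sum fun m hm =>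
      (h_big m (by rw [Finset.mem_Ioo] at hm; omega)).trans_eq (div_eq_mul_inv _ _)
    _ = K * ∑ m ∈ Finset.Ioo N a, ((m : ℝ) ^ 2)⁻¹ := (Finset.mul_sum _ _ _).symm
    _ ≤ K * (2 / (N + 1)) := by gcongr; exact sum_Ioo_inv_sq_le N a
    _ ≤ K * (2 / ε⁻¹) := by gcongr
    _ = 2 * K * ε := by field_simp
  have hdisj : Disjoint (Finset.range (N + 1)) (Finset.Ioo N a) :=
    Finset.disjoint_left.mpr fun m h₁ h₂ =>
      (Finset.mem_Ioo.mp h₂).1.not_ge (Nat.lt_succ_iff.mp (Finset.mem_range.mp h₁))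
  calc ∑ m ∈ Finset.range a, e m
      ≤ ∑ m ∈ Finset.range (N + 1) ∪ Finset.Ioo N a, e m :=
        Finset.sum_le_sum_of_subset_of_nonneg (fun m hm => by
          rw [Finset.mem_range] at hm
          rw [Finset.mem_union, Finset.mem_range, Finset.mem_Ioo]
          omega)
          fun m _ _ => he m
    _ = ∑ m ∈ Finset.range (N + 1), e m + ∑ m ∈ Finset.Ioo N a, e m := Finset.sum_union hdisj
    _ ≤ 4 * K * ε := by linarith

lemma summable_and_tsum_le_of_le_mul_sq_of_le_div_sq {d : ℤ → ℝ} {K ε : ℝ}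
    (hε : ε ∈ Ioc (0 : ℝ) 1) (hd : ∀ k, 0 ≤ d k) (h_small : ∀ k, d k ≤ K * ε ^ 2)
    (h_big : ∀ k, k ≠ 0 → d k ≤ K / (k : ℝ) ^ 2) :
    Summable d ∧ ∑' k, d k ≤ 8 * K * ε := by
  have hpos : ∀ a, ∑ m ∈ Finset.range a, d m ≤ 4 * K * ε :=
    sum_range_le_of_le_mul_sq_of_le_div_sq hε (fun m => hd m) (fun m => h_small m)
      fun m hm => by simpa using h_big m (by exact_mod_cast hm)
  have hneg : ∀ a, ∑ m ∈ Finset.range a, d (-m) ≤ 4 * K * ε :=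
    sum_range_le_of_le_mul_sq_of_le_div_sq hε (fun m => hd _) (fun m => h_small _)
      fun m hm => by simpa using h_big (-m) (by omega)
  have hs_pos := summable_of_sum_range_le (fun m => hd m) hpos
  have hs_neg := summable_of_sum_range_le (fun m => hd (-m)) hneg
  refine ⟨.of_nat_of_neg hs_pos hs_neg, ?_⟩
  rw [Summable.tsum_of_nat_of_neg hs_pos hs_neg]
  linarith [hs_pos.tsum_le_of_sum_range_le hpos, hs_neg.tsum_le_of_sum_range_le hneg, hd 0]

lemma summable_norm_smul_and_norm_tsum_smul_le {ι 𝕜 E : Type*} [NormedField 𝕜]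
    [SeminormedAddCommGroup E] [NormedSpace 𝕜 E] {a : ι → 𝕜} {s : ι → E} {M : ℝ}
    (ha : Summable fun i => ‖a i‖) (hs : ∀ i, ‖s i‖ ≤ M) :
    Summable (fun i => ‖a i • s i‖) ∧ ‖∑' i, a i • s i‖ ≤ (∑' i, ‖a i‖) * M := by
  have hle : ∀ i, ‖a i • s i‖ ≤ ‖a i‖ * M := fun i =>
    (norm_smul_le _ _).trans (mul_le_mul_of_nonneg_left (hs i) (norm_nonneg _))
  exact ⟨.of_nonneg_of_le (fun _ => norm_nonneg _) hle (ha.mul_right M),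
    (tsum_of_norm_bounded (ha.mul_right M).hasSum hle).trans_eq tsum_mul_right⟩

theorem stmt_19 {X : Type*} [NormedAddCommGroup X] [NormedSpace ℂ X]
    (x : ℕ → X) (M : ℝ)
    (hM : ∀ n : ℕ, ‖∑ i ∈ Finset.range (n + 1), x i‖ ≤ M)
    (ε : ℝ) (hε : ε ∈ Set.Ioc (0 : ℝ) 1) (z : ℤ → ℂ) (K : ℝ)
    (hz_small : ∀ n : ℤ, ‖z n - z (n - 1)‖ ≤ K * ε ^ 2)
    (hz_big : ∀ n : ℤ, n ≠ 0 → ‖z n - z (n - 1)‖ ≤ K / (n : ℝ) ^ 2) :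
    ∀ n : ℕ,
      Summable (fun j : ℕ =>
        ‖(z ((n : ℤ) - j) - z ((n : ℤ) - j - 1)) • ∑ i ∈ Finset.range (j + 1), x i‖) ∧
      ‖∑' j : ℕ, (z ((n : ℤ) - j) - z ((n : ℤ) - j - 1)) • ∑ i ∈ Finset.range (j + 1), x i‖ ≤
        8 * K * M * ε := by
  intro n
  obtain ⟨hd_sum, hd_le⟩ := summable_and_tsum_le_of_le_mul_sq_of_le_div_sq
    (d := fun k => ‖z k - z (k - 1)‖) hε (fun _ => norm_nonneg _) hz_small hz_big
  have hinj : Function.Injective fun j : ℕ => (n : ℤ) - j := fun i j h => by simpa using h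
  have hc_le := (tsum_comp_le_tsum_of_inj hd_sum (fun _ => norm_nonneg _) hinj).trans hd_le
  obtain ⟨hsum, hnorm⟩ := summable_norm_smul_and_norm_tsum_smul_le
    (s := fun j => ∑ i ∈ Finset.range (j + 1), x i) (hd_sum.comp_injective hinj) hM
  refine ⟨hsum, hnorm.trans ?_⟩
  calc _ ≤ 8 * K * ε * M := mul_le_mul_of_nonneg_right hc_le ((norm_nonneg _).trans (hM 0))
    _ = 8 * K * M * ε := by ring
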